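/- Let R > 0, let U ⊆ ℝ³ be an open set containing the sphere S_R = {x ∈ ℝ³ : |x| = R}, and let F : U → ℝ³ be C¹ with DF(x) invertible for every x ∈ S_R and F(x) = x for all x ∈ S_R. Then for every x ∈ S_R and every E ∈ ℂ³, with ν = x/|x| the unit outward normal, one has ν × ((DF(x)ᵀ)⁻¹E) = ν × E; in particular the tangential component of the pulled-back field (DFᵀ)⁻¹E agrees with that of E on the sphere. -/

import Mathlib

/-- The Euclidean norm on `Fin 3 → ℝ`. -/
noncomputable def enorm3 (x : Fin 3 → ℝ) : ℝ := Real.sqrt (x 0 ^ 2 + x 1 ^ 2 + x 2 ^ 2)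

/-- The Jacobian matrix of a map `F : ℝ³ → ℝ³` at a point `y`. -/
noncomputable def jac (F : (Fin 3 → ℝ) → (Fin 3 → ℝ)) (y : Fin 3 → ℝ) :
    Matrix (Fin 3) (Fin 3) ℝ :=
  Matrix.of fun i j => fderiv ℝ F y (Pi.single j 1) i

/-- A real 3×3 matrix acting componentwise on ℂ³. -/
noncomputable def mulVecC (M : Matrix (Fin 3) (Fin 3) ℝ) (v : Fin 3 → ℂ) : Fin 3 → ℂ :=
  (M.map (fun a => (a : ℂ))).mulVec v

/-- Cross product of a real vector with a complex vector (componentwise on real and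
imaginary parts). -/
noncomputable def crossRC (v : Fin 3 → ℝ) (w : Fin 3 → ℂ) : Fin 3 → ℂ :=
  ![(v 1 : ℂ) * w 2 - (v 2 : ℂ) * w 1,
    (v 2 : ℂ) * w 0 - (v 0 : ℂ) * w 2,
    (v 0 : ℂ) * w 1 - (v 1 : ℂ) * w 0]

/-!
Differentiating `F` along the great circle `t ↦ cos t • x + sin t • u` through `x` with tangent
`u ⊥ x`, which `F` fixes pointwise, shows that `M = DF(x)` is the identity on `x^⊥`. Hence
`w = (Mᵀ)⁻¹E - E` satisfies `w ⬝ v = w ⬝ Mv = (Mᵀw) ⬝ v = 0` for `v ⊥ x`; in particular every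
coordinate `w ⬝ (eᵢ × x)` of `x × w` vanishes. The complex statement follows by taking real and
imaginary parts.
-/

open Matrix

section CrossProduct

variable {R : Type*} [CommRing R]

theorem cross_eq_zero_of_forall_dotProduct_eq_zero {x w : Fin 3 → R}
    (hw : ∀ v, v ⬝ᵥ x = 0 → w ⬝ᵥ v = 0) : x ⨯₃ w = 0 := by
  funext i
  have hperp : (Pi.single i 1 ⨯₃ x) ⬝ᵥ x = 0 := by
    rw [dotProduct_comm, dot_cross_self]
  calc (x ⨯₃ w) i = Pi.single i 1 ⬝ᵥ x ⨯₃ w := by simp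
    _ = w ⬝ᵥ Pi.single i 1 ⨯₃ x := by
      rw [triple_product_permutation, triple_product_permutation]
    _ = 0 := hw _ hperp

theorem cross_inv_transpose_mulVec {M : Matrix (Fin 3) (Fin 3) R} (hM : IsUnit M)
    {x : Fin 3 → R} (hfix : ∀ v, v ⬝ᵥ x = 0 → M *ᵥ v = v) (e : Fin 3 → R) :
    x ⨯₃ (Mᵀ⁻¹ *ᵥ e) = x ⨯₃ e := by
  have := hM.invertible
  suffices x ⨯₃ (Mᵀ⁻¹ *ᵥ e - e) = 0 by rwa [map_sub, sub_eq_zero] at this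
  refine cross_eq_zero_of_forall_dotProduct_eq_zero fun v hv => ?_
  have hinv : M⁻¹ *ᵥ v = v := inv_mulVec_eq_vec (hfix v hv).symm
  rw [sub_dotProduct, sub_eq_zero, ← transpose_nonsing_inv, mulVec_transpose,
    ← dotProduct_mulVec, hinv]

end CrossProduct

open Real

section GreatCircle

variable {E : Type*} [NormedAddCommGroup E] [NormedSpace ℝ E]

theorem HasFDerivAt.apply_eq_self_of_comp_eq {F : E → E} {L : E →L[ℝ] E} {γ : ℝ → E} {u : E}
    {t : ℝ} (hF : HasFDerivAt F L (γ t)) (hγ : HasDerivAt γ u t) (hfix : ∀ s, F (γ s) = γ s) :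
    L u = u := by
  have hcomp := hF.comp_hasDerivAt t hγ
  rw [show F ∘ γ = γ from funext hfix] at hcomp
  exact hcomp.unique hγ

theorem hasDerivAt_cos_smul_add_sin_smul (x u : E) :
    HasDerivAt (fun t => cos t • x + sin t • u) u 0 := by
  simpa using ((hasDerivAt_cos 0).smul_const x).fun_add ((hasDerivAt_sin 0).smul_const u)

theorem cos_smul_add_sin_smul_dotProduct_self {n : Type*} [Fintype n] {x u : n → ℝ}
    (hu : u ⬝ᵥ u = x ⬝ᵥ x) (hux : u ⬝ᵥ x = 0) (t : ℝ) :
    (cos t • x + sin t • u) ⬝ᵥ (cos t • x + sin t • u) = x ⬝ᵥ x := by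
  have hxu : x ⬝ᵥ u = 0 := by rwa [dotProduct_comm]
  simp only [add_dotProduct, dotProduct_add, smul_dotProduct, dotProduct_smul, smul_eq_mul,
    hu, hux, hxu]
  linear_combination (x ⬝ᵥ x) * sin_sq_add_cos_sq t

end GreatCircle

theorem HasFDerivAt.apply_eq_self_of_dotProduct_eq_zero {n : Type*} [Fintype n]
    {F : (n → ℝ) → (n → ℝ)} {L : (n → ℝ) →L[ℝ] (n → ℝ)} {x v : n → ℝ} (hF : HasFDerivAt F L x)
    (hx : x ≠ 0) (hfix : ∀ y, y ⬝ᵥ y = x ⬝ᵥ x → F y = y) (hv : v ⬝ᵥ x = 0) : L v = v := by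
  rcases eq_or_ne v 0 with rfl | hv0
  · simp
  have hxx : 0 < x ⬝ᵥ x := by simpa using dotProduct_self_star_pos_iff.mpr hx
  have hvv : 0 < v ⬝ᵥ v := by simpa using dotProduct_self_star_pos_iff.mpr hv0
  -- rescale `v` to the radius of the sphere through `x`, so that it spans a great circle
  set c := √(x ⬝ᵥ x) / √(v ⬝ᵥ v)
  have hc : c ≠ 0 := by positivity
  have hu : (c • v) ⬝ᵥ (c • v) = x ⬝ᵥ x := by
    simp only [smul_dotProduct, dotProduct_smul, smul_eq_mul, c]
    field_simp
    rw [sq_sqrt hxx.le, sq_sqrt hvv.le, mul_comm]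
  have hux : (c • v) ⬝ᵥ x = 0 := by rw [smul_dotProduct, hv, smul_zero]
  have hγ := hasDerivAt_cos_smul_add_sin_smul x (c • v)
  have hcv : L (c • v) = c • v :=
    HasFDerivAt.apply_eq_self_of_comp_eq (by simpa using hF) hγ fun t =>
      hfix _ (cos_smul_add_sin_smul_dotProduct_self hu hux t)
  rw [L.map_smul] at hcv
  exact smul_right_injective _ hc hcv

theorem enorm3_eq_sqrt_dotProduct (x : Fin 3 → ℝ) : enorm3 x = √(x ⬝ᵥ x) := by
  simp [enorm3, dotProduct, Fin.sum_univ_three, sq]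

theorem jac_mulVec (F : (Fin 3 → ℝ) → (Fin 3 → ℝ)) (y v : Fin 3 → ℝ) :
    jac F y *ᵥ v = fderiv ℝ F y v := by
  have : jac F y = LinearMap.toMatrix' (fderiv ℝ F y : (Fin 3 → ℝ) →ₗ[ℝ] Fin 3 → ℝ) := by
    ext i j
    simp [jac, LinearMap.toMatrix'_apply]
  rw [this, LinearMap.toMatrix'_mulVec]
  rfl

theorem re_comp_crossRC (v : Fin 3 → ℝ) (w : Fin 3 → ℂ) :
    Complex.re ∘ crossRC v w = v ⨯₃ (Complex.re ∘ w) := by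
  funext i; fin_cases i <;> simp [crossRC, cross_apply]

theorem im_comp_crossRC (v : Fin 3 → ℝ) (w : Fin 3 → ℂ) :
    Complex.im ∘ crossRC v w = v ⨯₃ (Complex.im ∘ w) := by
  funext i; fin_cases i <;> simp [crossRC, cross_apply]

theorem re_comp_mulVecC (M : Matrix (Fin 3) (Fin 3) ℝ) (E : Fin 3 → ℂ) :
    Complex.re ∘ mulVecC M E = M *ᵥ (Complex.re ∘ E) := by
  funext i; simp [mulVecC, mulVec, dotProduct, Fin.sum_univ_three]

theorem im_comp_mulVecC (M : Matrix (Fin 3) (Fin 3) ℝ) (E : Fin 3 → ℂ) :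
    Complex.im ∘ mulVecC M E = M *ᵥ (Complex.im ∘ E) := by
  funext i; simp [mulVecC, mulVec, dotProduct, Fin.sum_univ_three]

theorem crossRC_mulVecC_of_forall_cross_mulVec {v : Fin 3 → ℝ} {M : Matrix (Fin 3) (Fin 3) ℝ}
    (h : ∀ e, v ⨯₃ (M *ᵥ e) = v ⨯₃ e) (E : Fin 3 → ℂ) : crossRC v (mulVecC M E) = crossRC v E := by
  have hre := h (Complex.re ∘ E)
  have him := h (Complex.im ∘ E)
  rw [← re_comp_mulVecC, ← re_comp_crossRC, ← re_comp_crossRC] at hre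
  rw [← im_comp_mulVecC, ← im_comp_crossRC, ← im_comp_crossRC] at him
  exact funext fun i => Complex.ext (congrFun hre i) (congrFun him i)

/-- If a C¹ map `F` fixes the sphere of radius `R` pointwise and has
invertible Jacobian there, then for every `x` on the sphere and every `E ∈ ℂ³`, with
`ν = x/|x|`, one has `ν × ((DF(x)ᵀ)⁻¹E) = ν × E`: the tangential component of the
pulled-back field agrees with that of `E` on the sphere. -/
theorem tangential_trace_invariance
    (R : ℝ) (hR : 0 < R) (U : Set (Fin 3 → ℝ)) (hU : IsOpen U)
    (hsub : {x : Fin 3 → ℝ | enorm3 x = R} ⊆ U)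
    (F : (Fin 3 → ℝ) → (Fin 3 → ℝ)) (hF : ContDiffOn ℝ 1 F U)
    (hinv : ∀ x : Fin 3 → ℝ, enorm3 x = R → IsUnit (jac F x))
    (hfix : ∀ x : Fin 3 → ℝ, enorm3 x = R → F x = x) :
    ∀ x : Fin 3 → ℝ, enorm3 x = R → ∀ E : Fin 3 → ℂ,
      crossRC ((enorm3 x)⁻¹ • x) (mulVecC ((jac F x).transpose)⁻¹ E) =
        crossRC ((enorm3 x)⁻¹ • x) E := by
  intro x hx E
  have hx0 : x ≠ 0 := by
    rintro rfl
    simp [enorm3] at hx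
    linarith
  have hDF : HasFDerivAt F (fderiv ℝ F x) x :=
    ((hF.differentiableOn one_ne_zero).differentiableAt (hU.mem_nhds (hsub hx))).hasFDerivAt
  have hfix' : ∀ y, y ⬝ᵥ y = x ⬝ᵥ x → F y = y := fun y hy =>
    hfix y (by rw [enorm3_eq_sqrt_dotProduct, hy, ← enorm3_eq_sqrt_dotProduct, hx])
  have htangent : ∀ v, v ⬝ᵥ x = 0 → jac F x *ᵥ v = v := fun v hv => by
    rw [jac_mulVec]
    exact hDF.apply_eq_self_of_dotProduct_eq_zero hx0 hfix' hv
  refine crossRC_mulVecC_of_forall_cross_mulVec (fun e => ?_) E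
  rw [map_smul, LinearMap.smul_apply, LinearMap.smul_apply,
    cross_inv_transpose_mulVec (hinv x hx) htangent]
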